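/- arXiv:2507.20450 — 2 statements merged into one kernel-verified Lean document; each statement's English description precedes it below -/
import Mathlib

section
/- Assume lim_{s→∞} f'(s)F(s) = q and lim_{s→∞} f'(s)²/(f(s)f''(s)) = q with q > 1 (in particular f''(s) ≠ 0 for all sufficiently large s). Then I is differentiable on [ρ₀,∞) and I'(ρ) → 0 as ρ → ∞. -/
/-!
Write `a = f F` and `b = f' F`. Since `F' = -1/f`, we get `a' = b - 1 → q - 1`, hence
`a(s)/s → q - 1` as well (mean value theorem), and `a b' = F² f f'' - f' F`, where
`F² f f'' = (f' F)² / (f'² / (f f''))` tends to `q² / q = q`, so `a b' → 0`.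
Along `s = φ(ρ)`, with `φ' = 2a`, the chain rule gives
`I' = 8 (a/s) ((a' - a/s)(b - q) + a b')`, and every term of the bracket tends to `0`.
-/

open Set Filter Topology MeasureTheory

theorem hasDerivAt_integral_Ioi {E : Type*} [NormedAddCommGroup E] [NormedSpace ℝ E]
    [CompleteSpace E] {g : ℝ → E} {b x : ℝ} (hg : IntegrableOn g (Ioi b)) (hbx : b < x)
    (hcont : ContinuousAt g x) :
    HasDerivAt (fun y => ∫ t in Ioi y, g t) (-g x) x := by
  have hnhds : Ioi b ∈ 𝓝 x := Ioi_mem_nhds hbx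
  have hsplit : (fun y => (∫ t in Ioi b, g t) - ∫ t in b..y, g t) =ᶠ[𝓝 x]
      fun y => ∫ t in Ioi y, g t := by
    filter_upwards [hnhds] with y hy
    rw [← intervalIntegral.integral_Ioi_sub_Ioi hg (le_of_lt hy), sub_sub_cancel]
  have hint : IntervalIntegrable g volume b x :=
    (intervalIntegrable_iff_integrableOn_Ioc_of_le hbx.le).2 (hg.mono_set Ioc_subset_Ioi_self)
  have hmeas : StronglyMeasurableAtFilter g (𝓝 x) :=
    AEStronglyMeasurable.stronglyMeasurableAtFilter_of_mem hg.aestronglyMeasurable hnhds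
  exact ((intervalIntegral.integral_hasDerivAt_right hint hmeas hcont).const_sub
    (∫ t in Ioi b, g t)).congr_of_eventuallyEq hsplit.symm

theorem tendsto_inv_smul_of_hasDerivAt {E : Type*} [NormedAddCommGroup E] [NormedSpace ℝ E]
    {a a' : ℝ → E} {L : E} (hd : ∀ᶠ s in atTop, HasDerivAt a (a' s) s)
    (hlim : Tendsto a' atTop (𝓝 L)) :
    Tendsto (fun s => s⁻¹ • a s) atTop (𝓝 L) := by
  rw [Metric.tendsto_nhds]
  intro ε hε
  have hnear : ∀ᶠ s in atTop, dist (a' s) L < ε / 2 :=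
    hlim.eventually (Metric.ball_mem_nhds L (half_pos hε))
  obtain ⟨s₀, hs₀⟩ := ((hd.and hnear).and (eventually_gt_atTop 0)).exists_forall_of_atTop
  set g : ℝ → E := fun s => a s - s • L
  have hg : ∀ s ≥ s₀, ‖g s - g s₀‖ ≤ ε / 2 * ‖s - s₀‖ := fun s hs =>
    Convex.norm_image_sub_le_of_norm_hasDerivWithin_le (f' := fun x => a' x - L)
      (fun x hx => (((hs₀ x hx).1.1.sub ((hasDerivAt_id x).smul_const L)).congr_deriv
        (by simp)).hasDerivWithinAt)
      (fun x hx => by simpa [dist_eq_norm] using (hs₀ x hx).1.2.le) (convex_Ici s₀)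
      self_mem_Ici hs
  have hsmall : Tendsto (fun s : ℝ => s⁻¹ * ‖g s₀‖) atTop (𝓝 0) := by
    simpa using tendsto_inv_atTop_zero.mul_const ‖g s₀‖
  filter_upwards [eventually_ge_atTop s₀, hsmall.eventually (gt_mem_nhds (half_pos hε))]
    with s hs hs_small
  have hs₀pos : 0 < s₀ := (hs₀ s₀ le_rfl).2
  have hspos : 0 < s := hs₀pos.trans_le hs
  have hdiff : s⁻¹ • a s - L = s⁻¹ • (g s₀ + (g s - g s₀)) := by
    simp only [g, add_sub_cancel, smul_sub, smul_smul, inv_mul_cancel₀ hspos.ne', one_smul]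
  have hrest : s⁻¹ * (ε / 2 * ‖s - s₀‖) ≤ ε / 2 := by
    rw [Real.norm_of_nonneg (sub_nonneg.2 hs), inv_mul_le_iff₀ hspos]
    nlinarith
  calc dist (s⁻¹ • a s) L = s⁻¹ * ‖g s₀ + (g s - g s₀)‖ := by
        rw [dist_eq_norm, hdiff, norm_smul, Real.norm_of_nonneg (inv_nonneg.2 hspos.le)]
    _ ≤ s⁻¹ * ‖g s₀‖ + s⁻¹ * (ε / 2 * ‖s - s₀‖) := by
        rw [← mul_add]
        gcongr
        exact (norm_add_le _ _).trans (by gcongr; exact hg s hs)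
    _ < ε := by linarith

theorem tendsto_sq_mul_mul_of_tendsto {α : Type*} {l : Filter α} {u v w F : α → ℝ} {q : ℝ}
    (hq : q ≠ 0) (hu : ∀ᶠ s in l, u s ≠ 0) (h₁ : Tendsto (fun s => u s * F s) l (𝓝 q))
    (h₂ : Tendsto (fun s => u s ^ 2 / (v s * w s)) l (𝓝 q)) :
    Tendsto (fun s => F s ^ 2 * v s * w s) l (𝓝 q) := by
  have h := (h₁.pow 2).div h₂ hq
  rw [sq, mul_div_cancel_right₀ _ hq] at h
  refine h.congr' ?_
  filter_upwards [hu] with s hs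
  rcases eq_or_ne (v s * w s) 0 with h0 | h0
  · simp [h0, mul_assoc]
  · simp only [Pi.div_apply]
    field_simp

theorem hasDerivWithinAt_div_mul_sub_comp {a b φ : ℝ → ℝ} {a' b' q ρ : ℝ} {S : Set ℝ}
    (ha : HasDerivAt a a' (φ ρ)) (hb : HasDerivAt b b' (φ ρ))
    (hφ : HasDerivWithinAt φ (2 * a (φ ρ)) S ρ) (hφ0 : φ ρ ≠ 0) :
    HasDerivWithinAt (fun r => 4 * (a (φ r) / φ r) * (b (φ r) - q))
      (8 * (a (φ ρ) / φ ρ) * ((a' - a (φ ρ) / φ ρ) * (b (φ ρ) - q) + a (φ ρ) * b'))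
      S ρ := by
  have h := ((ha.div (hasDerivAt_id _) hφ0).const_mul 4).mul (hb.sub_const q)
  refine (h.comp_hasDerivWithinAt ρ hφ).congr_deriv ?_
  simp only [Pi.div_apply, id]
  field_simp
  ring

theorem exists_tendsto_deriv_div_mul_sub_comp {a a' b b' φ : ℝ → ℝ} {q L ρ₀ : ℝ}
    (ha : ∀ s, 0 < s → HasDerivAt a (a' s) s) (hb : ∀ s, 0 < s → HasDerivAt b (b' s) s)
    (ha' : Tendsto a' atTop (𝓝 L)) (hbq : Tendsto b atTop (𝓝 q))
    (hab' : Tendsto (fun s => a s * b' s) atTop (𝓝 0))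
    (hφpos : ∀ ρ ∈ Ici ρ₀, 0 < φ ρ)
    (hφ : ∀ ρ ∈ Ici ρ₀, HasDerivWithinAt φ (2 * a (φ ρ)) (Ici ρ₀) ρ)
    (hφtop : Tendsto φ atTop atTop) :
    ∃ I' : ℝ → ℝ,
      (∀ ρ ∈ Ici ρ₀, HasDerivWithinAt (fun r => 4 * (a (φ r) / φ r) * (b (φ r) - q))
        (I' ρ) (Ici ρ₀) ρ) ∧ Tendsto I' atTop (𝓝 0) := by
  have hslope : Tendsto (fun s => a s / s) atTop (𝓝 L) := by
    simpa only [smul_eq_mul, inv_mul_eq_div] using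
      tendsto_inv_smul_of_hasDerivAt ((eventually_gt_atTop 0).mono ha) ha'
  refine ⟨fun ρ => 8 * (a (φ ρ) / φ ρ) *
      ((a' (φ ρ) - a (φ ρ) / φ ρ) * (b (φ ρ) - q) + a (φ ρ) * b' (φ ρ)),
    fun ρ hρ => hasDerivWithinAt_div_mul_sub_comp (ha _ (hφpos ρ hρ)) (hb _ (hφpos ρ hρ))
      (hφ ρ hρ) (hφpos ρ hρ).ne', ?_⟩
  have h := (hslope.const_mul 8).mul (((ha'.sub hslope).mul (hbq.sub_const q)).add hab')
  rw [show 8 * L * ((L - L) * (q - q) + 0) = 0 by ring] at h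
  exact h.comp hφtop

/-- If `f'(s)F(s) → q` and `f'(s)²/(f(s)f''(s)) → q` as `s → ∞`
with `q > 1`, then `I(ρ) = 4·(f(φ)F(φ)/φ)·(f'(φ)F(φ) − q)` is differentiable
on `[ρ₀,∞)` and `I'(ρ) → 0` as `ρ → ∞`. -/
theorem I_deriv_tendsto_zero (f F : ℝ → ℝ) (q : ℝ) (hq : 1 < q)
    (hf : ContDiffOn ℝ 2 f (Set.Ioi 0))
    (hfpos : ∀ s : ℝ, 0 < s → 0 < f s)
    (hf'pos : ∀ s : ℝ, 0 < s → 0 < deriv f s)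
    (hfint : ∀ s : ℝ, 0 < s →
      MeasureTheory.IntegrableOn (fun t => (f t)⁻¹) (Set.Ioi s))
    (hF : ∀ s : ℝ, F s = ∫ t in Set.Ioi s, (f t)⁻¹)
    (hlim : Filter.Tendsto (fun s => deriv f s * F s) Filter.atTop (nhds q))
    (hlim2 : Filter.Tendsto (fun s => (deriv f s) ^ 2 / (f s * deriv (deriv f) s))
      Filter.atTop (nhds q))
    (ρ₀ : ℝ) (φ : ℝ → ℝ)
    (hφpos : ∀ ρ ∈ Set.Ici ρ₀, 0 < φ ρ)
    (hφderiv : ∀ ρ ∈ Set.Ici ρ₀,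
      HasDerivWithinAt φ (2 * f (φ ρ) * F (φ ρ)) (Set.Ici ρ₀) ρ)
    (hφtop : Filter.Tendsto φ Filter.atTop Filter.atTop)
    (Ifun : ℝ → ℝ)
    (hI : ∀ ρ : ℝ, Ifun ρ =
      4 * (f (φ ρ) * F (φ ρ) / φ ρ) * (deriv f (φ ρ) * F (φ ρ) - q)) :
    ∃ I' : ℝ → ℝ,
      (∀ ρ ∈ Set.Ici ρ₀, HasDerivWithinAt Ifun (I' ρ) (Set.Ici ρ₀) ρ) ∧
      Filter.Tendsto I' Filter.atTop (nhds 0) := by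
  have hfd : ∀ s, 0 < s → HasDerivAt f (deriv f s) s := fun s hs =>
    ((hf.differentiableOn two_ne_zero).differentiableAt (Ioi_mem_nhds hs)).hasDerivAt
  have hf'd : ∀ s, 0 < s → HasDerivAt (deriv f) (deriv (deriv f) s) s := fun s hs =>
    (((hf.deriv_of_isOpen isOpen_Ioi (by norm_num)).differentiableOn one_ne_zero).differentiableAt
      (Ioi_mem_nhds hs)).hasDerivAt
  have hFd : ∀ s, 0 < s → HasDerivAt F (-(f s)⁻¹) s := fun s hs => by
    rw [funext hF]
    exact hasDerivAt_integral_Ioi (hfint (s / 2) (half_pos hs)) (half_lt_self hs)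
      ((hfd s hs).continuousAt.inv₀ (hfpos s hs).ne')
  have ha : ∀ s, 0 < s → HasDerivAt (fun x => f x * F x) (deriv f s * F s - 1) s := fun s hs =>
    ((hfd s hs).mul (hFd s hs)).congr_deriv (by field_simp [(hfpos s hs).ne']; ring)
  have hab' : Tendsto (fun s => f s * F s * (deriv (deriv f) s * F s + deriv f s * -(f s)⁻¹))
      atTop (𝓝 0) := by
    have h := (tendsto_sq_mul_mul_of_tendsto (by linarith) ((eventually_gt_atTop 0).mono
      fun s hs => (hf'pos s hs).ne') hlim hlim2).sub hlim
    rw [sub_self] at h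
    refine h.congr' ?_
    filter_upwards [eventually_gt_atTop 0] with s hs
    field_simp [(hfpos s hs).ne']
    ring
  rw [funext hI]
  exact exists_tendsto_deriv_div_mul_sub_comp ha (fun s hs => (hf'd s hs).mul (hFd s hs))
    (hlim.sub_const 1) hlim hab' hφpos
    (fun ρ hρ => by simpa only [mul_assoc] using hφderiv ρ hρ) hφtop
end

section
/- Assume lim_{s→∞} f'(s)F(s) = q with q > 1. Then for every λ > 0, lim_{τ→∞} ∫_{ρ₀}^{τ} (1 + (τ−t))·e^{−λ(τ−t)}·|I(t)| dt = 0; in particular also lim_{τ→∞} ∫_{ρ₀}^{τ} e^{−λ(τ−t)}·|I(t)| dt = 0. -/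
/-!
Since `(fF)' = f'F - 1 → q - 1`, the product `fF` grows at most linearly, so `fF(φ)/φ` stays
bounded while `f'(φ)F(φ) - q → 0`; hence `I(ρ) → 0`. As `I` is continuous on `[ρ₀, ∞)`, it is
bounded there, and after the substitution `u = τ - t` dominated convergence shows that
convolving it with any kernel integrable on `(0, ∞)`, such as `(1 + u) e^{-λu}` or `e^{-λu}`,
still gives a function tending to `0`.
-/

open MeasureTheory Filter Set Asymptotics Topology

theorem hasDerivAt_integral_Ioi_s9 {g : ℝ → ℝ} {a s : ℝ} (hg : IntegrableOn g (Ioi a))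
    (has : a < s) (hgs : ContinuousAt g s) :
    HasDerivAt (fun x => ∫ t in Ioi x, g t) (-g s) s := by
  have hint : HasDerivAt (fun x => ∫ t in a..x, g t) (g s) s :=
    intervalIntegral.integral_hasDerivAt_right
      ((intervalIntegrable_iff_integrableOn_Ioc_of_le has.le).2
        (hg.mono_set Ioc_subset_Ioi_self))
      (AEStronglyMeasurable.stronglyMeasurableAtFilter_of_mem hg.aestronglyMeasurable
        (Ioi_mem_nhds has)) hgs
  refine (hint.const_sub (∫ t in Ioi a, g t)).congr_of_eventuallyEq ?_
  filter_upwards [Ioi_mem_nhds has] with x hx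
  exact eq_sub_of_add_eq' (intervalIntegral.integral_interval_add_Ioi hg
    (hg.mono_set (Ioi_subset_Ioi hx.le)))

theorem isBigO_id_of_hasDerivAt_of_isBigO_one {g g' : ℝ → ℝ}
    (hderiv : ∀ᶠ s in atTop, HasDerivAt g (g' s) s) (hg' : g' =O[atTop] fun _ => (1 : ℝ)) :
    g =O[atTop] id := by
  obtain ⟨C, hC⟩ := hg'.bound
  obtain ⟨s₀, hs₀⟩ := eventually_atTop.1 ((hderiv.and hC).and (eventually_ge_atTop 0))
  have hmvt : ∀ s ≥ s₀, ‖g s - g s₀‖ ≤ C * ‖s - s₀‖ := fun s hs =>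
    (convex_Ici s₀).norm_image_sub_le_of_norm_hasDerivWithin_le
      (fun x hx => (hs₀ x hx).1.1.hasDerivWithinAt)
      (fun x hx => by simpa using (hs₀ x hx).1.2) self_mem_Ici hs
  have hdiff : (fun s => g s - g s₀) =O[atTop] id := by
    refine IsBigO.of_bound C ?_
    filter_upwards [eventually_ge_atTop s₀] with s hs
    refine (hmvt s hs).trans (mul_le_mul_of_nonneg_left ?_ ?_)
    · have := (hs₀ s₀ le_rfl).2
      simp only [Real.norm_eq_abs, id, abs_of_nonneg (sub_nonneg.2 hs),
        abs_of_nonneg (this.trans hs)]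
      linarith
    · exact (norm_nonneg (g' s₀)).trans (by simpa using (hs₀ s₀ le_rfl).1.2)
  simpa using hdiff.add (isLittleO_const_id_atTop (g s₀)).isBigO

theorem ContinuousOn.exists_norm_le_of_tendsto_atTop {E : Type*} [NormedAddCommGroup E]
    {h : ℝ → E} {a : ℝ} {c : E} (hc : ContinuousOn h (Ici a)) (hlim : Tendsto h atTop (𝓝 c)) :
    ∃ B, ∀ t ∈ Ici a, ‖h t‖ ≤ B := by
  obtain ⟨T, hT⟩ := eventually_atTop.1 (hlim.norm.eventually (eventually_le_nhds
    (lt_add_one ‖c‖)))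
  obtain ⟨M, hM⟩ := isCompact_Icc.exists_bound_of_continuousOn
    (hc.mono (Icc_subset_Ici_self : Icc a T ⊆ Ici a))
  refine ⟨max M (‖c‖ + 1), fun t ht => ?_⟩
  rcases le_total t T with htT | hTt
  · exact (hM t ⟨ht, htT⟩).trans (le_max_left _ _)
  · exact (hT t hTt).trans (le_max_right _ _)
theorem integral_comp_sub_mul_eq_integral_indicator {K h : ℝ → ℝ} {a τ : ℝ} (hτ : a ≤ τ) :
    ∫ t in a..τ, K (τ - t) * h t =
      ∫ u in Ioi 0, (Ioc 0 (τ - a)).indicator (fun u => K u * h (τ - u)) u := by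
  rw [integral_indicator measurableSet_Ioc, Measure.restrict_restrict measurableSet_Ioc,
    inter_eq_left.2 Ioc_subset_Ioi_self, ← intervalIntegral.integral_of_le (sub_nonneg.2 hτ)]
  simpa using
    intervalIntegral.integral_comp_sub_left (fun u => K u * h (τ - u)) τ (a := a) (b := τ)

theorem tendsto_integral_comp_sub_mul_of_tendsto_zero {K h : ℝ → ℝ} {a : ℝ}
    (hK : IntegrableOn K (Ioi 0)) (hc : ContinuousOn h (Ici a))
    (hlim : Tendsto h atTop (𝓝 0)) :
    Tendsto (fun τ => ∫ t in a..τ, K (τ - t) * h t) atTop (𝓝 0) := by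
  obtain ⟨B, hB⟩ := hc.exists_norm_le_of_tendsto_atTop hlim
  have hdom : Tendsto (fun τ => ∫ u in Ioi 0, (Ioc 0 (τ - a)).indicator
      (fun u => K u * h (τ - u)) u) atTop (𝓝 (∫ _ in Ioi (0 : ℝ), (0 : ℝ))) := by
    refine tendsto_integral_filter_of_dominated_convergence (fun u => ‖K u‖ * B)
      (Eventually.of_forall fun τ => ?_) (Eventually.of_forall fun τ => ?_)
      (hK.norm.mul_const B) ?_
    · rw [aestronglyMeasurable_indicator_iff measurableSet_Ioc, Measure.restrict_restrict
        measurableSet_Ioc, inter_eq_left.2 Ioc_subset_Ioi_self]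
      refine (hK.mono_set Ioc_subset_Ioi_self).aestronglyMeasurable.mul
        (ContinuousOn.aestronglyMeasurable ?_ measurableSet_Ioc)
      exact hc.comp (continuous_const.sub continuous_id).continuousOn
        fun u hu => show a ≤ τ - u by linarith [hu.2]
    · refine ae_of_all _ fun u => ?_
      by_cases hu : u ∈ Ioc 0 (τ - a)
      · rw [indicator_of_mem hu, norm_mul]
        exact mul_le_mul_of_nonneg_left (hB _ (show a ≤ τ - u by linarith [hu.2]))
          (norm_nonneg _)
      · rw [indicator_of_notMem hu, norm_zero]
        exact mul_nonneg (norm_nonneg _) ((norm_nonneg _).trans (hB a self_mem_Ici))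
    · refine (ae_restrict_iff' measurableSet_Ioi).2 (ae_of_all _ fun u hu => ?_)
      have hshift : Tendsto (fun τ => K u * h (τ - u)) atTop (𝓝 0) := by
        simpa [sub_eq_add_neg] using
          (hlim.comp (tendsto_atTop_add_const_right _ (-u) tendsto_id)).const_mul (K u)
      refine hshift.congr' ?_
      filter_upwards [eventually_ge_atTop (a + u)] with τ hτ
      rw [indicator_of_mem (show u ∈ Ioc 0 (τ - a) from ⟨hu, by linarith⟩)]
  rw [integral_zero] at hdom
  refine hdom.congr' ?_
  filter_upwards [eventually_ge_atTop a] with τ hτ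
  exact (integral_comp_sub_mul_eq_integral_indicator hτ).symm

theorem integrableOn_one_add_mul_exp_neg_mul {b : ℝ} (hb : 0 < b) :
    IntegrableOn (fun u => (1 + u) * Real.exp (-b * u)) (Ioi 0) := by
  have hpoly : IntegrableOn (fun u => u * Real.exp (-b * u)) (Ioi 0) := by
    simpa using integrableOn_rpow_mul_exp_neg_mul_rpow (s := 1) (p := 1) (by norm_num) one_pos hb
  refine ((exp_neg_integrableOn_Ioi 0 hb).add hpoly).congr_fun (fun u _ => ?_) measurableSet_Ioi
  simp only [Pi.add_apply]
  ring

theorem kernel_integral_of_I_tendsto_zero_general (f F : ℝ → ℝ) (q : ℝ)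
    (hf : ContDiffOn ℝ 2 f (Set.Ioi 0))
    (hfpos : ∀ s : ℝ, 0 < s → 0 < f s)
    (hfint : ∀ s : ℝ, 0 < s →
      MeasureTheory.IntegrableOn (fun t => (f t)⁻¹) (Set.Ioi s))
    (hF : ∀ s : ℝ, F s = ∫ t in Set.Ioi s, (f t)⁻¹)
    (hlim : Filter.Tendsto (fun s => deriv f s * F s) Filter.atTop (nhds q))
    (ρ₀ : ℝ) (φ : ℝ → ℝ)
    (hφpos : ∀ ρ ∈ Set.Ici ρ₀, 0 < φ ρ)
    (hφderiv : ∀ ρ ∈ Set.Ici ρ₀,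
      HasDerivWithinAt φ (2 * f (φ ρ) * F (φ ρ)) (Set.Ici ρ₀) ρ)
    (hφtop : Filter.Tendsto φ Filter.atTop Filter.atTop)
    (Ifun : ℝ → ℝ)
    (hI : ∀ ρ : ℝ, Ifun ρ =
      4 * (f (φ ρ) * F (φ ρ) / φ ρ) * (deriv f (φ ρ) * F (φ ρ) - q)) :
    ∀ lam : ℝ, 0 < lam →
      Filter.Tendsto
        (fun τ => ∫ t in ρ₀..τ, (1 + (τ - t)) * Real.exp (-lam * (τ - t)) * |Ifun t|)
        Filter.atTop (nhds 0) ∧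
      Filter.Tendsto
        (fun τ => ∫ t in ρ₀..τ, Real.exp (-lam * (τ - t)) * |Ifun t|)
        Filter.atTop (nhds 0) := by
  have hf' : ∀ s > 0, HasDerivAt f (deriv f s) s := fun s hs =>
    ((hf.differentiableOn two_ne_zero).differentiableAt (Ioi_mem_nhds hs)).hasDerivAt
  have hF' : ∀ s > 0, HasDerivAt F (-(f s)⁻¹) s := fun s hs => by
    rw [funext hF]
    exact hasDerivAt_integral_Ioi_s9 (hfint (s / 2) (by positivity)) (by linarith)
      ((hf.continuousOn.continuousAt (Ioi_mem_nhds hs)).inv₀ (hfpos s hs).ne')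
  have hgrowth : (fun s => f s * F s) =O[atTop] id := by
    refine isBigO_id_of_hasDerivAt_of_isBigO_one (g' := fun s => deriv f s * F s - 1) ?_
      ((hlim.sub_const 1).isBigO_one ℝ)
    filter_upwards [eventually_gt_atTop 0] with s hs
    have hprod := (hf' s hs).mul (hF' s hs)
    rwa [mul_neg, mul_inv_cancel₀ (hfpos s hs).ne', ← sub_eq_add_neg] at hprod
  have hIlim : Tendsto Ifun atTop (𝓝 0) := by
    have hdev : (fun ρ => deriv f (φ ρ) * F (φ ρ) - q) =o[atTop] fun _ => (1 : ℝ) :=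
      (isLittleO_one_iff ℝ).2 (by simpa using (hlim.comp hφtop).sub_const q)
    simpa [funext hI, mul_div_right_comm, mul_assoc] using
      (((hgrowth.comp_tendsto hφtop).mul_isLittleO hdev).tendsto_div_nhds_zero).const_mul 4
  have hIcont : ContinuousOn Ifun (Ici ρ₀) := by
    have hφc : ContinuousOn φ (Ici ρ₀) := fun ρ hρ => (hφderiv ρ hρ).continuousWithinAt
    have hFc : ContinuousOn F (Ioi 0) := fun s hs => (hF' s hs).continuousAt.continuousWithinAt
    have hf'c : ContinuousOn (deriv f) (Ioi 0) :=
      hf.continuousOn_deriv_of_isOpen isOpen_Ioi (by norm_num)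
    rw [funext hI]
    have hFφ := hFc.comp hφc hφpos
    exact (continuousOn_const.mul (((hf.continuousOn.comp hφc hφpos).mul hFφ).div hφc
      fun ρ hρ => (hφpos ρ hρ).ne')).mul
      (((hf'c.comp hφc hφpos).mul hFφ).sub continuousOn_const)
  intro lam hlam
  have hIabs : Tendsto (fun t => |Ifun t|) atTop (𝓝 0) := by simpa using hIlim.abs
  exact ⟨tendsto_integral_comp_sub_mul_of_tendsto_zero
      (K := fun u => (1 + u) * Real.exp (-lam * u)) (integrableOn_one_add_mul_exp_neg_mul hlam)
      hIcont.abs hIabs,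
    tendsto_integral_comp_sub_mul_of_tendsto_zero (exp_neg_integrableOn_Ioi 0 hlam)
      hIcont.abs hIabs⟩

/-- If `f'(s)F(s) → q` with `q > 1`, then for every `λ > 0`,
`∫_{ρ₀}^{τ} (1+(τ−t))·e^{−λ(τ−t)}·|I(t)| dt → 0` as `τ → ∞`, and in
particular `∫_{ρ₀}^{τ} e^{−λ(τ−t)}·|I(t)| dt → 0` as well. -/
theorem kernel_integral_of_I_tendsto_zero (f F : ℝ → ℝ) (q : ℝ) (hq : 1 < q)
    (hf : ContDiffOn ℝ 2 f (Set.Ioi 0))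
    (hfpos : ∀ s : ℝ, 0 < s → 0 < f s)
    (hf'pos : ∀ s : ℝ, 0 < s → 0 < deriv f s)
    (hfint : ∀ s : ℝ, 0 < s →
      MeasureTheory.IntegrableOn (fun t => (f t)⁻¹) (Set.Ioi s))
    (hF : ∀ s : ℝ, F s = ∫ t in Set.Ioi s, (f t)⁻¹)
    (hlim : Filter.Tendsto (fun s => deriv f s * F s) Filter.atTop (nhds q))
    (ρ₀ : ℝ) (φ : ℝ → ℝ)
    (hφpos : ∀ ρ ∈ Set.Ici ρ₀, 0 < φ ρ)
    (hφderiv : ∀ ρ ∈ Set.Ici ρ₀,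
      HasDerivWithinAt φ (2 * f (φ ρ) * F (φ ρ)) (Set.Ici ρ₀) ρ)
    (hφtop : Filter.Tendsto φ Filter.atTop Filter.atTop)
    (Ifun : ℝ → ℝ)
    (hI : ∀ ρ : ℝ, Ifun ρ =
      4 * (f (φ ρ) * F (φ ρ) / φ ρ) * (deriv f (φ ρ) * F (φ ρ) - q)) :
    ∀ lam : ℝ, 0 < lam →
      Filter.Tendsto
        (fun τ => ∫ t in ρ₀..τ, (1 + (τ - t)) * Real.exp (-lam * (τ - t)) * |Ifun t|)
        Filter.atTop (nhds 0) ∧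
      Filter.Tendsto
        (fun τ => ∫ t in ρ₀..τ, Real.exp (-lam * (τ - t)) * |Ifun t|)
        Filter.atTop (nhds 0) :=
  kernel_integral_of_I_tendsto_zero_general f F q hf hfpos hfint hF hlim ρ₀ φ hφpos hφderiv hφtop
    Ifun hI
end
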